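/- arXiv:2103.17027 — 7 statements merged into one kernel-verified Lean document; each statement's English description precedes it below -/
import Mathlib

section
/- For all real numbers y > 1/e and x > -1/e, the principal branch of the Lambert W function satisfies e^{W(x)} ≤ (x + y)/(1 + log y). -/
/-- Hoorfar–Hassani inequality for the principal branch of the Lambert W function:
`w = W(x)` is characterized by `w * exp w = x` with `w ≥ -1`. -/
theorem lambertW_hoorfar_hassani (x y w : ℝ)
    (hy : 1 / Real.exp 1 < y) (hx : -(1 / Real.exp 1) < x)
    (hw_def : w * Real.exp w = x) (hw_ge : -1 ≤ w) :
    Real.exp w ≤ (x + y) / (1 + Real.log y) := by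
  have hy0 : 0 < y := lt_trans (by positivity) hy
  have hL : -1 < Real.log y := by
    have := Real.log_lt_log (by positivity) hy
    simpa [Real.log_div, Real.log_exp] using this
  have hden : 0 < 1 + Real.log y := by linarith
  rw [le_div_iff₀ hden]
  have key : Real.log y - w + 1 ≤ Real.exp (Real.log y - w) := Real.add_one_le_exp _
  have h2 : Real.exp w * (Real.log y - w + 1) ≤ y := by
    calc Real.exp w * (Real.log y - w + 1) ≤ Real.exp w * Real.exp (Real.log y - w) := by
          exact mul_le_mul_of_nonneg_left key (Real.exp_pos w).le
      _ = y := by rw [← Real.exp_add]; ring_nf; exact Real.exp_log hy0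
  nlinarith [Real.exp_pos w]
end

section
/- Let X be a nonnegative random variable with mean μ > 0 such that E[exp(tX)] ≤ exp(μ(e^t − 1)) for all t > 0. Then for all real k > 0, E[X^k] ≤ (k / log(1 + k/μ))^k. -/
open MeasureTheory Real

lemma rpow_le_aux {x t k : ℝ} (hx : 0 ≤ x) (ht : 0 < t) (hk : 0 < k) :
    x ^ k ≤ (k / t) ^ k * Real.exp (t * x - k) := by
  rcases hx.eq_or_lt with h | hx'
  · rw [← h, Real.zero_rpow hk.ne']
    positivity
  · rw [Real.rpow_def_of_pos hx', Real.rpow_def_of_pos (by positivity : (0:ℝ) < k / t),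
      ← Real.exp_add, Real.exp_le_exp]
    have h1 : Real.log (t * x / k) ≤ t * x / k - 1 :=
      Real.log_le_sub_one_of_pos (by positivity)
    have h2 : Real.log (t * x / k) = Real.log x - Real.log (k / t) := by
      rw [Real.log_div (by positivity) hk.ne', Real.log_mul ht.ne' hx'.ne',
        Real.log_div hk.ne' ht.ne']
      ring
    rw [h2] at h1
    have h3 := mul_le_mul_of_nonneg_left h1 hk.le
    have h4 : k * (t * x / k - 1) = t * x - k := by field_simp
    rw [h4] at h3
    nlinarith
set_option maxHeartbeats 800000 in
/-- Sub-Poissonian moment bound: if `X ≥ 0` has mean `μ > 0` and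
`E[exp(tX)] ≤ exp(μ(e^t - 1))` for all `t > 0`, then
`E[X^k] ≤ (k / log(1 + k/μ))^k` for all real `k > 0`. -/
theorem subPoissonian_moment_bound {Ω : Type*} [MeasureSpace Ω]
    (P : Measure Ω) [IsProbabilityMeasure P]
    (X : Ω → ℝ) (μ : ℝ) (hμ : 0 < μ)
    (hX_nonneg : ∀ ω, 0 ≤ X ω)
    (hX_int : Integrable X P) (h_mean : ∫ ω, X ω ∂P = μ)
    (h_mgf_int : ∀ t > 0, Integrable (fun ω => Real.exp (t * X ω)) P)
    (h_mgf : ∀ t > 0, ∫ ω, Real.exp (t * X ω) ∂P ≤ Real.exp (μ * (Real.exp t - 1)))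
    (k : ℝ) (hk : 0 < k) (h_mom : Integrable (fun ω => X ω ^ k) P) :
    ∫ ω, X ω ^ k ∂P ≤ (k / Real.log (1 + k / μ)) ^ k := by
  set t := Real.log (1 + k / μ) with ht_def
  have hkμ : 0 < k / μ := div_pos hk hμ
  have ht : 0 < t := Real.log_pos (by linarith)
  have het : Real.exp t = 1 + k / μ := Real.exp_log (by linarith)
  set C : ℝ := (k / t) ^ k * Real.exp (-k) with hC
  have hC0 : 0 ≤ C := by positivity
  have hint : Integrable (fun ω => C * Real.exp (t * X ω)) P :=
    (h_mgf_int t ht).const_mul C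
  have step1 : ∫ ω, X ω ^ k ∂P ≤ ∫ ω, C * Real.exp (t * X ω) ∂P := by
    refine integral_mono h_mom hint fun ω => ?_
    have := rpow_le_aux (hX_nonneg ω) ht hk (x := X ω)
    calc X ω ^ k ≤ (k / t) ^ k * Real.exp (t * X ω - k) := this
      _ = C * Real.exp (t * X ω) := by rw [hC, Real.exp_sub, Real.exp_neg]; ring
  have step2 : ∫ ω, C * Real.exp (t * X ω) ∂P ≤ C * Real.exp (μ * (Real.exp t - 1)) := by
    rw [integral_const_mul]
    exact mul_le_mul_of_nonneg_left (h_mgf t ht) hC0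
  have hfin : C * Real.exp (μ * (Real.exp t - 1)) = (k / t) ^ k := by
    rw [hC, het]
    have : μ * (1 + k / μ - 1) = k := by field_simp; ring
    rw [this, mul_assoc, ← Real.exp_add]
    simp
  linarith [step1, step2, hfin.le, hfin.ge]
end

section
/- Let X be a nonnegative random variable with mean μ > 0 such that E[exp(tX)] ≤ exp(μ(e^t − 1)) for all t > 0. Then for all real k > 0, E[(X/μ)^k] ≤ (1 + k/(2μ))^k ≤ exp(k²/(2μ)). -/
open MeasureTheory Real

lemma aux_A (t : ℝ) (ht : 0 ≤ t) : (2 - t) * Real.exp t ≤ 2 + t := by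
  set f : ℝ → ℝ := fun s => 2 + s - (2 - s) * Real.exp s with hf
  have hderiv : ∀ s : ℝ, HasDerivAt f (1 - (1 - s) * Real.exp s) s := by
    intro s
    have h1 : HasDerivAt (fun s : ℝ => (2 - s) * Real.exp s)
        ((-1) * Real.exp s + (2 - s) * Real.exp s) s :=
      (((hasDerivAt_id s).const_sub 2).mul (Real.hasDerivAt_exp s))
    have h2 : HasDerivAt (fun s : ℝ => 2 + s) 1 s := (hasDerivAt_id s).const_add 2
    have := h2.sub h1
    exact this.congr_deriv (by ring)
  have hmono : Monotone f := by
    apply monotone_of_deriv_nonneg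
    · exact fun s => (hderiv s).differentiableAt
    · intro s
      rw [(hderiv s).deriv]
      have : (1 - s) * Real.exp s ≤ 1 := by
        have h := Real.add_one_le_exp (-s)
        have hpos := Real.exp_pos s
        have : (1 - s) ≤ Real.exp (-s) := by linarith
        calc (1 - s) * Real.exp s ≤ Real.exp (-s) * Real.exp s :=
              mul_le_mul_of_nonneg_right this (le_of_lt hpos)
          _ = 1 := by rw [← Real.exp_add]; simp
      linarith
  have h0 : f 0 = 0 := by simp [hf]
  have := hmono ht
  rw [h0] at this
  simp only [hf] at this
  linarith

lemma aux_B (α : ℝ) (hα : 0 ≤ α) : Real.exp (2 * α / (2 + α)) ≤ 1 + α := by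
  set t := 2 * α / (2 + α) with hT
  have h2α : (0:ℝ) < 2 + α := by linarith
  have ht : 0 ≤ t := by positivity
  have hA := aux_A t ht
  have h2mt : 2 - t = 4 / (2 + α) := by rw [hT]; field_simp; ring
  have h2pt : 2 + t = 4 * (1 + α) / (2 + α) := by rw [hT]; field_simp; ring
  rw [h2mt, h2pt] at hA
  have h4 : (0:ℝ) < 4 / (2 + α) := by positivity
  calc Real.exp t = (4 / (2 + α) * Real.exp t) * ((2 + α) / 4) := by
        field_simp
    _ ≤ (4 * (1 + α) / (2 + α)) * ((2 + α) / 4) := by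
        apply mul_le_mul_of_nonneg_right hA; positivity
    _ = 1 + α := by field_simp

lemma aux_C (x t k : ℝ) (hx : 0 ≤ x) (ht : 0 < t) (hk : 0 < k) :
    x ^ k ≤ (k / t) ^ k * Real.exp (t * x - k) := by
  rcases eq_or_lt_of_le hx with h | h
  · rw [← h, Real.zero_rpow (ne_of_gt hk)]
    positivity
  · rw [← Real.exp_log (show (0:ℝ) < x ^ k by positivity),
      ← Real.exp_log (show (0:ℝ) < (k/t)^k by positivity), ← Real.exp_add]
    apply Real.exp_le_exp.mpr
    rw [Real.log_rpow h, Real.log_rpow (by positivity)]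
    have hy : 0 < t * x / k := by positivity
    have := Real.log_le_sub_one_of_pos hy
    rw [Real.log_div (by positivity) (ne_of_gt hk), Real.log_mul (ne_of_gt ht) (ne_of_gt h)] at this
    have hh : k * (Real.log t + Real.log x - Real.log k) ≤ k * (t * x / k - 1) :=
      mul_le_mul_of_nonneg_left this (le_of_lt hk)
    have hc : k * (t * x / k) = t * x := by field_simp
    rw [Real.log_div (ne_of_gt hk) (ne_of_gt ht)]
    nlinarith [hh, hc]

/-- Corollary of the sub-Poissonian moment bound:
`E[(X/μ)^k] ≤ (1 + k/(2μ))^k ≤ exp(k²/(2μ))`. -/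
theorem subPoissonian_moment_bound_cor {Ω : Type*} [MeasureSpace Ω]
    (P : Measure Ω) [IsProbabilityMeasure P]
    (X : Ω → ℝ) (μ : ℝ) (hμ : 0 < μ)
    (hX_nonneg : ∀ ω, 0 ≤ X ω)
    (hX_int : Integrable X P) (h_mean : ∫ ω, X ω ∂P = μ)
    (h_mgf_int : ∀ t > 0, Integrable (fun ω => Real.exp (t * X ω)) P)
    (h_mgf : ∀ t > 0, ∫ ω, Real.exp (t * X ω) ∂P ≤ Real.exp (μ * (Real.exp t - 1)))
    (k : ℝ) (hk : 0 < k) (h_mom : Integrable (fun ω => X ω ^ k) P) :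
    (∫ ω, (X ω / μ) ^ k ∂P ≤ (1 + k / (2 * μ)) ^ k) ∧
      (1 + k / (2 * μ)) ^ k ≤ Real.exp (k ^ 2 / (2 * μ)) := by
  have hμk : (0:ℝ) < μ + k / 2 := by linarith
  set t : ℝ := k / (μ + k / 2) with hT
  have ht : 0 < t := by positivity
  -- e^t ≤ 1 + k/μ
  have hexp_t : Real.exp t ≤ 1 + k / μ := by
    have hα : 0 ≤ k / μ := by positivity
    have := aux_B (k / μ) hα
    have heq : 2 * (k / μ) / (2 + k / μ) = t := by
      rw [hT]; field_simp
    rwa [heq] at this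
  have hμet : μ * (Real.exp t - 1) ≤ k := by
    have := mul_le_mul_of_nonneg_left hexp_t (le_of_lt hμ)
    rw [mul_add, mul_div_cancel₀ _ (ne_of_gt hμ), mul_one] at this
    linarith
  -- ∫ X^k ≤ (μ + k/2)^k
  have hkt : k / t = μ + k / 2 := by
    rw [hT]; field_simp
  have hmom_bound : ∫ ω, X ω ^ k ∂P ≤ (μ + k / 2) ^ k := by
    have hint2 : Integrable (fun ω => (k / t) ^ k * Real.exp (-k) * Real.exp (t * X ω)) P :=
      (h_mgf_int t ht).const_mul _
    have hle : ∀ ω, X ω ^ k ≤ (k / t) ^ k * Real.exp (-k) * Real.exp (t * X ω) := by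
      intro ω
      have := aux_C (X ω) t k (hX_nonneg ω) ht hk
      rwa [show t * X ω - k = -k + t * X ω by ring, Real.exp_add, ← mul_assoc] at this
    calc ∫ ω, X ω ^ k ∂P
        ≤ ∫ ω, (k / t) ^ k * Real.exp (-k) * Real.exp (t * X ω) ∂P :=
          integral_mono h_mom hint2 hle
      _ = (k / t) ^ k * Real.exp (-k) * ∫ ω, Real.exp (t * X ω) ∂P := by
          rw [integral_const_mul]
      _ ≤ (k / t) ^ k * Real.exp (-k) * Real.exp (μ * (Real.exp t - 1)) := by
          apply mul_le_mul_of_nonneg_left (h_mgf t ht); positivity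
      _ ≤ (k / t) ^ k * Real.exp (-k) * Real.exp k := by
          apply mul_le_mul_of_nonneg_left (Real.exp_le_exp.mpr hμet); positivity
      _ = (μ + k / 2) ^ k := by
          rw [hkt, mul_assoc, ← Real.exp_add]; simp
  constructor
  · have hptw : ∀ ω, (X ω / μ) ^ k = X ω ^ k / μ ^ k := fun ω =>
      Real.div_rpow (hX_nonneg ω) (le_of_lt hμ) k
    rw [show (fun ω => (X ω / μ) ^ k) = fun ω => X ω ^ k / μ ^ k from funext hptw] at *
    rw [integral_div]
    rw [div_le_iff₀ (by positivity : (0:ℝ) < μ ^ k)]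
    calc ∫ ω, X ω ^ k ∂P ≤ (μ + k / 2) ^ k := hmom_bound
      _ = (1 + k / (2 * μ)) ^ k * μ ^ k := by
          rw [← Real.mul_rpow (by positivity) (le_of_lt hμ)]
          congr 1
          field_simp
  · have h1 : (0:ℝ) < 1 + k / (2 * μ) := by positivity
    rw [← Real.exp_log (show (0:ℝ) < (1 + k / (2*μ)) ^ k by positivity), Real.log_rpow h1]
    apply Real.exp_le_exp.mpr
    have := Real.log_le_sub_one_of_pos h1
    have h2 : Real.log (1 + k / (2 * μ)) ≤ k / (2 * μ) := by linarith
    calc k * Real.log (1 + k / (2 * μ)) ≤ k * (k / (2 * μ)) :=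
          mul_le_mul_of_nonneg_left h2 (le_of_lt hk)
      _ = k ^ 2 / (2 * μ) := by ring
end

section
/- For all real x > 0, 1/W(x) + W(x) − 1 − 1/x ≤ log(x) − log(log(1+x)), where W is the principal branch of the Lambert W function. -/
/-- For `x > 0` and `w = W(x)` (i.e. `w * exp w = x`, `w > 0`),
`1/W(x) + W(x) - 1 - 1/x ≤ log x - log (log (1+x))`. -/
theorem lambertW_key_inequality (x w : ℝ) (hx : 0 < x)
    (hw_def : w * Real.exp w = x) (hw_pos : 0 < w) :
    1 / w + w - 1 - 1 / x ≤ Real.log x - Real.log (Real.log (1 + x)) := by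
  set E := Real.exp (-w) with hE
  have hEpos : 0 < E := Real.exp_pos _
  have hewpos : 0 < Real.exp w := Real.exp_pos _
  have hEe : E * Real.exp w = 1 := by rw [hE, ← Real.exp_add]; simp
  set L := Real.log (1 + x) with hL
  -- log x = log w + w
  have hlogx : Real.log x = Real.log w + w := by
    rw [← hw_def, Real.log_mul (ne_of_gt hw_pos) (ne_of_gt hewpos), Real.log_exp]
  -- 1 + x = exp w * (w + E)
  have hfac : 1 + x = Real.exp w * (w + E) := by
    rw [← hw_def]; ring_nf; nlinarith [hEe]
  have hwEpos : 0 < w + E := by positivity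
  -- L = w + log (w + E)
  have hLid : L = w + Real.log (w + E) := by
    rw [hL, hfac, Real.log_mul (ne_of_gt hewpos) (ne_of_gt hwEpos), Real.log_exp]
  -- log (w+E) ≤ w + E - 1
  have h1 : Real.log (w + E) ≤ w + E - 1 := Real.log_le_sub_one_of_pos hwEpos
  have hLub : L ≤ 2 * w + E - 1 := by rw [hLid]; linarith
  -- L > 0
  have hLpos : 0 < L := Real.log_pos (by linarith)
  -- log L ≤ log w + L / w - 1
  have h2 : Real.log (L / w) ≤ L / w - 1 :=
    Real.log_le_sub_one_of_pos (by positivity)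
  have h3 : Real.log L ≤ Real.log w + L / w - 1 := by
    rw [Real.log_div (ne_of_gt hLpos) (ne_of_gt hw_pos)] at h2
    linarith
  -- 1/x = E/w
  have hxinv : 1 / x = E / w := by
    rw [← hw_def]
    field_simp
    nlinarith [hEe]
  rw [hlogx, hxinv]
  have hLw : L / w ≤ 2 + E / w - 1 / w := by
    rw [div_le_iff₀ hw_pos]
    have : (2 + E / w - 1 / w) * w = 2 * w + E - 1 := by field_simp
    rw [this]; exact hLub
  linarith
end

section
/- The function g(x) = 1/W(x) + W(x) − 1 − 1/x − log(x) + log(log(1+x)) is nonincreasing on (0, ∞), and g(x) → 0 as x → 0⁺. -/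
open Real Filter

private lemma exp_quad_bound (t : ℝ) (ht : 0 ≤ t) :
    Real.exp (-t) ≤ 1 - t + (3/4) * t^2 := by
  have h1 : 1 + t/2 ≤ Real.exp (t/2) := by
    have := Real.add_one_le_exp (t/2); linarith
  have h2 : Real.exp (t/2) * Real.exp (t/2) = Real.exp t := by
    rw [← Real.exp_add]; ring_nf
  have h3 : (1 + t/2) * (1 + t/2) ≤ Real.exp t := by
    nlinarith [Real.exp_pos (t/2)]
  have h4 : Real.exp (-t) * Real.exp t = 1 := by
    rw [← Real.exp_add]; simp
  have h5 : (0:ℝ) < 1 - t + (3/4) * t^2 := by nlinarith [sq_nonneg (t - 2/3)]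
  nlinarith [Real.exp_pos (-t), mul_le_mul_of_nonneg_left h3 (Real.exp_pos (-t)).le]

set_option maxHeartbeats 1000000 in
/-- With `W` the principal Lambert W function on `(0,∞)` (characterized by
`W x * exp (W x) = x`, `W x > 0`, and the derivative identity), the function
`g(x) = 1/W(x) + W(x) - 1 - 1/x - log x + log (log (1+x))` is nonincreasing on
`(0,∞)` and tends to `0` as `x → 0⁺`. -/
theorem g_antitone_and_tendsto_zero (W : ℝ → ℝ)
    (hW_def : ∀ x > 0, W x * Real.exp (W x) = x)
    (hW_pos : ∀ x > 0, 0 < W x)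
    (hW_deriv : ∀ x > 0, HasDerivAt W (W x / (x * (1 + W x))) x) :
    AntitoneOn
      (fun x => 1 / W x + W x - 1 - 1 / x - Real.log x + Real.log (Real.log (1 + x)))
      (Set.Ioi 0) ∧
    Tendsto
      (fun x => 1 / W x + W x - 1 - 1 / x - Real.log x + Real.log (Real.log (1 + x)))
      (nhdsWithin 0 (Set.Ioi 0)) (nhds 0) := by
  constructor
  · -- Antitone part
    have hF : (fun x => 1 / W x + W x - 1 - 1 / x - Real.log x + Real.log (Real.log (1 + x)))
        = fun x => (W x)⁻¹ + W x - 1 - x⁻¹ - Real.log x + Real.log (Real.log (1 + x)) := by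
      funext x; simp only [one_div]
    rw [hF]
    set F : ℝ → ℝ := fun x => (W x)⁻¹ + W x - 1 - x⁻¹ - Real.log x + Real.log (Real.log (1 + x))
      with hFdef
    have hderiv : ∀ x ∈ Set.Ioi (0:ℝ), HasDerivAt F
        (-(W x / (x * (1 + W x))) / W x ^ 2 + W x / (x * (1 + W x)) - -(x ^ 2)⁻¹ - x⁻¹
          + 1 / (1 + x) / Real.log (1 + x)) x := by
      intro x hx
      rw [Set.mem_Ioi] at hx
      have hw := hW_pos x hx
      have hd := hW_deriv x hx
      have hx1 : (0:ℝ) < 1 + x := by linarith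
      have hℓpos : 0 < Real.log (1 + x) := Real.log_pos (by linarith)
      have h1 : HasDerivAt (fun y => (W y)⁻¹) (-(W x / (x * (1 + W x))) / W x ^ 2) x :=
        hd.inv (ne_of_gt hw)
      have h2 : HasDerivAt (fun y : ℝ => y⁻¹) (-(x ^ 2)⁻¹) x := hasDerivAt_inv (ne_of_gt hx)
      have h3 : HasDerivAt Real.log x⁻¹ x := Real.hasDerivAt_log (ne_of_gt hx)
      have h4a : HasDerivAt (fun y : ℝ => 1 + y) 1 x := (hasDerivAt_id x).const_add 1
      have h4b : HasDerivAt (fun y => Real.log (1 + y)) (1 / (1 + x)) x := by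
        have := h4a.log (ne_of_gt hx1)
        simpa using this
      have h4 : HasDerivAt (fun y => Real.log (Real.log (1 + y)))
          (1 / (1 + x) / Real.log (1 + x)) x := h4b.log (ne_of_gt hℓpos)
      exact ((((h1.add hd).sub_const 1).sub h2).sub h3).add h4
    have hkey : ∀ x ∈ Set.Ioi (0:ℝ), deriv F x ≤ 0 := by
      intro x hx
      have hx' : (0:ℝ) < x := hx
      have hw := hW_pos x hx'
      have hwx := hW_def x hx'
      have hx1 : (0:ℝ) < 1 + x := by linarith
      set w := W x with hwdef
      set E := Real.exp w with hEdef
      have hE : (0:ℝ) < E := Real.exp_pos w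
      set ℓ := Real.log (1 + x) with hℓdef
      have hℓpos : 0 < ℓ := Real.log_pos (by linarith)
      have hE1 : 1 + w ≤ E := by have := Real.add_one_le_exp w; linarith
      have hN : E ≤ 1 + x := by
        have h := Real.add_one_le_exp (-w)
        have hinv : Real.exp (-w) * E = 1 := by rw [← Real.exp_add]; simp
        nlinarith [mul_le_mul_of_nonneg_right h hE.le]
      have hlog : w + (1 + x - E) / (1 + x) ≤ ℓ := by
        have hy : (0:ℝ) < (1 + x) / E := by positivity
        have h1 : 1 - ((1 + x) / E)⁻¹ ≤ Real.log ((1 + x) / E) :=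
          Real.one_sub_inv_le_log_of_pos hy
        have h2 : Real.log ((1 + x) / E) = ℓ - w := by
          rw [Real.log_div (ne_of_gt hx1) (ne_of_gt hE), hEdef, Real.log_exp]
        have h3 : ((1 + x) / E)⁻¹ = E / (1 + x) := by rw [inv_div]
        rw [h2, h3] at h1
        have h4 : (1 + x - E) / (1 + x) = 1 - E / (1 + x) := by field_simp
        rw [h4]; linarith
      have hbE : (E - 1) * ((1 + x) * w + (1 + x - E)) ≤ (E - 1) * ((1 + x) * ℓ) := by
        have hb : (1 + x) * w + (1 + x - E) ≤ (1 + x) * ℓ := by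
          have h := mul_le_mul_of_nonneg_left hlog hx1.le
          have heq : (1 + x) * (w + (1 + x - E) / (1 + x)) = (1 + x) * w + (1 + x - E) := by
            field_simp
          linarith [heq ▸ h]
        exact mul_le_mul_of_nonneg_left hb (by linarith)
      have hid : (E - 1) * ((1 + x) * w + (1 + x - E)) = x^2 + (E - 1 - w) * (1 + x - E) := by
        linear_combination x * hwx
      have key : x^2 ≤ (E - 1) * ((1 + x) * ℓ) := by
        nlinarith [mul_nonneg (by linarith : (0:ℝ) ≤ E - 1 - w) (by linarith : (0:ℝ) ≤ 1 + x - E)]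
      have hD : deriv F x = (x^2)⁻¹ - (x * w)⁻¹ + ((1 + x) * ℓ)⁻¹ := by
        rw [(hderiv x hx).deriv]
        simp only [← hwdef, ← hℓdef]
        have hwne : w ≠ 0 := ne_of_gt hw
        have hxne : x ≠ 0 := ne_of_gt hx'
        have h1w : (1:ℝ) + w ≠ 0 := by positivity
        have h1x : (1:ℝ) + x ≠ 0 := ne_of_gt hx1
        have hℓne : ℓ ≠ 0 := ne_of_gt hℓpos
        field_simp
        ring
      rw [hD]
      have h6 : ((1 + x) * ℓ)⁻¹ ≤ (x - w) / (x^2 * w) := by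
        rw [inv_eq_one_div, div_le_div_iff₀ (by positivity) (by positivity)]
        have hxw : x - w = w * (E - 1) := by linear_combination -hwx
        calc 1 * (x^2 * w) = w * x^2 := by ring
          _ ≤ w * ((E - 1) * ((1 + x) * ℓ)) := mul_le_mul_of_nonneg_left key hw.le
          _ = (x - w) * ((1 + x) * ℓ) := by rw [hxw]; ring
      have h7 : (x^2)⁻¹ - (x * w)⁻¹ = -((x - w) / (x^2 * w)) := by
        field_simp
        ring
      linarith
    exact antitoneOn_of_deriv_nonpos (convex_Ioi 0)
      (fun x hx => ((hderiv x hx).differentiableAt.continuousAt).continuousWithinAt)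
      (by rw [interior_Ioi]; exact fun x hx => (hderiv x hx).differentiableAt.differentiableWithinAt)
      (by rw [interior_Ioi]; exact hkey)
  · -- Tendsto part
    have hbound : ∀ x ∈ Set.Ioi (0:ℝ),
        -(3/4) * x ≤ (1 / W x + W x - 1 - 1 / x - Real.log x + Real.log (Real.log (1 + x))) ∧
        (1 / W x + W x - 1 - 1 / x - Real.log x + Real.log (Real.log (1 + x))) ≤ (3/4) * x := by
      intro x hx
      have hx' : (0:ℝ) < x := hx
      have hw := hW_pos x hx'
      have hwx := hW_def x hx'
      have hx1 : (0:ℝ) < 1 + x := by linarith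
      set w := W x with hwdef
      set E := Real.exp w with hEdef
      have hE : (0:ℝ) < E := Real.exp_pos w
      set ℓ := Real.log (1 + x) with hℓdef
      have hE1 : 1 + w ≤ E := by have := Real.add_one_le_exp w; linarith
      have hwle : w ≤ x := by nlinarith
      have hN : E ≤ 1 + x := by
        have h := Real.add_one_le_exp (-w)
        have hinv : Real.exp (-w) * E = 1 := by rw [← Real.exp_add]; simp
        nlinarith [mul_le_mul_of_nonneg_right h hE.le]
      have hℓw : w ≤ ℓ := by
        calc w = Real.log E := by rw [hEdef, Real.log_exp]
          _ ≤ ℓ := Real.log_le_log hE hN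
      have hℓpos : 0 < ℓ := lt_of_lt_of_le hw hℓw
      have hquad : Real.exp (-w) ≤ 1 - w + (3/4) * w^2 := exp_quad_bound w hw.le
      have hinvE : Real.exp (-w) * E = 1 := by rw [← Real.exp_add]; simp
      have hℓup : ℓ ≤ w + (3/4) * w^2 := by
        have h2 : Real.log ((1 + x) / E) ≤ (1 + x) / E - 1 :=
          Real.log_le_sub_one_of_pos (by positivity)
        have h2' : Real.log ((1 + x) / E) = ℓ - w := by
          rw [Real.log_div (ne_of_gt hx1) (ne_of_gt hE), hEdef, Real.log_exp]
        have h3 : (1 + x) / E = w + Real.exp (-w) := by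
          rw [div_eq_iff (ne_of_gt hE)]
          nlinarith [hinvE]
        rw [h2', h3] at h2
        linarith
      have hlogx : Real.log x = Real.log w + w := by
        rw [← hwx, Real.log_mul (ne_of_gt hw) (Real.exp_ne_zero w), Real.log_exp]
      have hinvx : 1 / x = Real.exp (-w) / w := by
        rw [← hwx, Real.exp_neg]
        field_simp
        rw [← hEdef]
      have hgx : 1 / W x + W x - 1 - 1 / x - Real.log x + Real.log (Real.log (1 + x))
          = (1 - Real.exp (-w) - w) / w + (Real.log ℓ - Real.log w) := by
        rw [← hwdef, ← hℓdef, hinvx, hlogx]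
        field_simp
        ring
      rw [hgx]
      have hnum_le : 1 - Real.exp (-w) - w ≤ 0 := by
        have := Real.add_one_le_exp (-w); linarith
      have hnum_ge : -(3/4) * w^2 ≤ 1 - Real.exp (-w) - w := by linarith
      have hterm1_le : (1 - Real.exp (-w) - w) / w ≤ 0 :=
        div_nonpos_of_nonpos_of_nonneg hnum_le hw.le
      have hterm1_ge : -(3/4) * w ≤ (1 - Real.exp (-w) - w) / w := by
        rw [le_div_iff₀ hw]
        nlinarith
      have hterm2_ge : 0 ≤ Real.log ℓ - Real.log w := by
        have := Real.log_le_log hw hℓw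
        linarith
      have hterm2_le : Real.log ℓ - Real.log w ≤ (3/4) * w := by
        have h1 : Real.log ℓ - Real.log w = Real.log (ℓ / w) := by
          rw [Real.log_div (ne_of_gt hℓpos) (ne_of_gt hw)]
        have h2 : Real.log (ℓ / w) ≤ ℓ / w - 1 := Real.log_le_sub_one_of_pos (by positivity)
        have h3 : ℓ / w ≤ 1 + (3/4) * w := by
          rw [div_le_iff₀ hw]
          nlinarith
        rw [h1]; linarith
      constructor
      · linarith
      · linarith
    have hlo : Tendsto (fun x : ℝ => -(3/4) * x) (nhdsWithin 0 (Set.Ioi 0)) (nhds 0) := by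
      have h : Tendsto (fun x : ℝ => -(3/4) * x) (nhds 0) (nhds (-(3/4) * 0)) :=
        (continuous_const.mul continuous_id).tendsto (0:ℝ)
      rw [mul_zero] at h
      exact h.mono_left nhdsWithin_le_nhds
    have hhi : Tendsto (fun x : ℝ => (3/4) * x) (nhdsWithin 0 (Set.Ioi 0)) (nhds 0) := by
      have h : Tendsto (fun x : ℝ => (3/4) * x) (nhds 0) (nhds ((3/4) * 0)) :=
        (continuous_const.mul continuous_id).tendsto (0:ℝ)
      rw [mul_zero] at h
      exact h.mono_left nhdsWithin_le_nhds
    refine tendsto_of_tendsto_of_tendsto_of_le_of_le' hlo hhi ?_ ?_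
    · filter_upwards [self_mem_nhdsWithin] with x hx
      exact (hbound x hx).1
    · filter_upwards [self_mem_nhdsWithin] with x hx
      exact (hbound x hx).2
end

section
/- If X ~ Binomial(n, p) with n ≥ k ≥ 2 integers and 0 < p < 1, then E[X^k] ≥ (np)^k · (1 − C(k,2)/n) · (1 + C(k,2)/(np)), where C(k,2) = k(k−1)/2. -/
open Finset

lemma mul_descFactorial (i k : ℕ) :
    i * i.descFactorial k = i.descFactorial (k+1) + k * i.descFactorial k := by
  rcases lt_or_ge i k with h | h
  · simp [Nat.descFactorial_eq_zero_iff_lt.2 h,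
      Nat.descFactorial_eq_zero_iff_lt.2 (h.trans (Nat.lt_succ_self k))]
  · rw [Nat.descFactorial_succ, ← Nat.add_mul, Nat.sub_add_cancel h]

lemma descFactorial_le_pow (k : ℕ) (hk : 1 ≤ k) (i : ℕ) :
    i.descFactorial k + k.choose 2 * i.descFactorial (k-1) ≤ i ^ k := by
  induction k with
  | zero => omega
  | succ k ih =>
    rcases Nat.eq_or_lt_of_le hk with h | h
    · simp [← h]
    · have hk1 : 1 ≤ k := by omega
      have IH := ih hk1
      have e1 := mul_descFactorial i k
      have e2 : i * i.descFactorial (k-1)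
          = i.descFactorial k + (k-1) * i.descFactorial (k-1) := by
        have := mul_descFactorial i (k-1); rwa [Nat.sub_add_cancel hk1] at this
      have h2 : (k+1).choose 2 = k.choose 2 + k := by
        rw [show (2:ℕ) = 1+1 from rfl, Nat.choose_succ_succ' k 1, Nat.choose_one_right]; omega
      calc i.descFactorial (k+1) + (k+1).choose 2 * i.descFactorial k
          ≤ i * (i.descFactorial k + k.choose 2 * i.descFactorial (k-1)) := by
            rw [Nat.mul_add, e1, Nat.mul_left_comm, e2, h2, Nat.add_mul, Nat.mul_add]
            linarith [Nat.zero_le (k.choose 2 * ((k-1) * i.descFactorial (k-1)))]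
        _ ≤ i * i ^ k := Nat.mul_le_mul_left i IH
        _ = i ^ (k+1) := by ring

lemma desc_choose_key (n j m : ℕ) (h : j + m ≤ n) :
    (j+m).descFactorial j * n.choose (j+m) = n.descFactorial j * (n-j).choose m := by
  have h1 := Nat.choose_mul (n := n) (k := j+m) (Nat.le_add_right j m)
  rw [Nat.descFactorial_eq_factorial_mul_choose, Nat.descFactorial_eq_factorial_mul_choose]
  rw [Nat.mul_assoc, Nat.mul_assoc, Nat.mul_comm ((j+m).choose j), h1]
  simp

lemma factorial_moment (n j : ℕ) (hj : j ≤ n) (p : ℝ) :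
    ∑ i ∈ Finset.range (n+1),
      (i.descFactorial j : ℝ) * ((n.choose i : ℝ) * p^i * (1-p)^(n-i))
    = (n.descFactorial j : ℝ) * p ^ j := by
  rw [Finset.range_eq_Ico,
    ← Finset.sum_Ico_consecutive _ (Nat.zero_le j) (by omega : j ≤ n+1)]
  have hz : ∑ i ∈ Finset.Ico 0 j,
      (i.descFactorial j : ℝ) * ((n.choose i : ℝ) * p^i * (1-p)^(n-i)) = 0 := by
    apply Finset.sum_eq_zero
    intro i hi
    simp only [Finset.mem_Ico] at hi
    rw [Nat.descFactorial_eq_zero_iff_lt.2 hi.2]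
    simp
  rw [hz, zero_add, Finset.sum_Ico_eq_sum_range]
  have hn1 : n + 1 - j = (n - j) + 1 := by omega
  rw [hn1]
  have hbin : ∑ m ∈ Finset.range ((n-j)+1),
      p^m * (1-p)^((n-j)-m) * ((n-j).choose m : ℝ) = 1 := by
    rw [← add_pow]; simp
  calc ∑ m ∈ Finset.range ((n-j)+1),
        ((j+m).descFactorial j : ℝ) * ((n.choose (j+m) : ℝ) * p^(j+m) * (1-p)^(n-(j+m)))
      = ∑ m ∈ Finset.range ((n-j)+1),
        (n.descFactorial j : ℝ) * p ^ j * (p^m * (1-p)^((n-j)-m) * ((n-j).choose m : ℝ)) := by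
        apply Finset.sum_congr rfl
        intro m hm
        simp only [Finset.mem_range] at hm
        have hmn : j + m ≤ n := by omega
        have key := desc_choose_key n j m hmn
        have hcast : ((j+m).descFactorial j : ℝ) * (n.choose (j+m) : ℝ)
            = (n.descFactorial j : ℝ) * ((n-j).choose m : ℝ) := by
          exact_mod_cast congrArg (Nat.cast : ℕ → ℝ) key
        have hsub : n - (j+m) = (n-j) - m := by omega
        rw [hsub, pow_add]
        linear_combination (p^j * p^m * (1-p)^((n-j)-m)) * hcast
    _ = (n.descFactorial j : ℝ) * p ^ j := by
        rw [← Finset.mul_sum, hbin, mul_one]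

lemma pow_sub_le_descFactorial (n : ℕ) : ∀ k : ℕ, 1 ≤ k → k ≤ n →
    (n:ℝ)^k - (k:ℝ)*((k:ℝ)-1)/2 * (n:ℝ)^(k-1) ≤ (n.descFactorial k : ℝ) := by
  intro k
  induction k with
  | zero => omega
  | succ k ih =>
    intro _ hkn
    rcases Nat.eq_zero_or_pos k with rfl | hk1
    · simp
    · have IH := ih hk1 (by omega)
      obtain ⟨m, rfl⟩ : ∃ m, k = m + 1 := ⟨k - 1, by omega⟩
      have hd : (n.descFactorial (m+1+1) : ℝ)
          = ((n:ℝ) - (m+1)) * (n.descFactorial (m+1) : ℝ) := by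
        rw [Nat.descFactorial_succ]
        push_cast [Nat.cast_sub (by omega : m+1 ≤ n)]
        ring
      have hnk : (0:ℝ) ≤ (n:ℝ) - (m+1) := by
        have : (m+1 : ℝ) ≤ n := by exact_mod_cast (by omega : m+1 ≤ n)
        linarith
      have hmul := mul_le_mul_of_nonneg_left IH hnk
      rw [← hd] at hmul
      have hpow : (0:ℝ) ≤ (n:ℝ)^m := by positivity
      simp only [Nat.add_sub_cancel] at *
      push_cast at *
      rw [pow_succ ((n:ℝ)) (m+1), pow_succ ((n:ℝ)) m] at *
      nlinarith [hpow, hmul, hnk, Nat.cast_nonneg (α := ℝ) n,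
        mul_nonneg (by positivity : (0:ℝ) ≤ ((m:ℝ)+1)^2 * m / 2) hpow]



open Real

/-- For `X ~ Binomial(n,p)` with `n ≥ k ≥ 2` and `0 < p < 1`:
`E[X^k] ≥ (np)^k (1 - C(k,2)/n)(1 + C(k,2)/(np))`. -/
theorem binomial_moment_lower_bound (n k : ℕ) (p : ℝ)
    (hk : 2 ≤ k) (hkn : k ≤ n) (hp0 : 0 < p) (hp1 : p < 1) :
    ((n : ℝ) * p) ^ k * (1 - (k : ℝ) * (k - 1) / 2 / n) *
        (1 + (k : ℝ) * (k - 1) / 2 / ((n : ℝ) * p)) ≤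
      ∑ i ∈ Finset.range (n + 1),
        (i : ℝ) ^ k * ((n.choose i : ℝ) * p ^ i * (1 - p) ^ (n - i)) := by
  obtain ⟨m, rfl⟩ : ∃ m, k = m + 2 := ⟨k - 2, by omega⟩
  have hn0 : (0:ℝ) < n := by
    have : 0 < n := by omega
    exact_mod_cast this
  have hnp : (0:ℝ) < (n:ℝ) * p := mul_pos hn0 hp0
  set c : ℝ := ((m:ℝ)+2)*((m:ℝ)+1)/2 with hcdef
  have hc : (((m+2).choose 2 : ℕ) : ℝ) = c := by
    rw [Nat.cast_choose_two]; push_cast; ring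
  have hc0 : 0 ≤ c := by positivity
  have hw : ∀ i : ℕ, 0 ≤ (n.choose i : ℝ) * p^i * (1-p)^(n-i) := by
    intro i
    have : 0 ≤ 1 - p := by linarith
    positivity
  have h1 : ∀ i ∈ Finset.range (n+1),
      ((i.descFactorial (m+2) : ℝ) + c * (i.descFactorial (m+1) : ℝ)) *
        ((n.choose i : ℝ) * p^i * (1-p)^(n-i)) ≤
      (i:ℝ)^(m+2) * ((n.choose i : ℝ) * p^i * (1-p)^(n-i)) := by
    intro i _
    apply mul_le_mul_of_nonneg_right _ (hw i)
    have hnat := descFactorial_le_pow (m+2) (by omega) i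
    rw [show m + 2 - 1 = m + 1 by omega] at hnat
    have : ((i.descFactorial (m+2) + (m+2).choose 2 * i.descFactorial (m+1) : ℕ) : ℝ)
        ≤ ((i ^ (m+2) : ℕ) : ℝ) := by exact_mod_cast hnat
    push_cast at this
    rw [hc] at this
    linarith
  have hFM1 := factorial_moment n (m+2) hkn p
  have hFM2 := factorial_moment n (m+1) (by omega) p
  have hsplit : ∑ i ∈ Finset.range (n+1),
      ((i.descFactorial (m+2) : ℝ) + c * (i.descFactorial (m+1) : ℝ)) *
        ((n.choose i : ℝ) * p^i * (1-p)^(n-i))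
      = (n.descFactorial (m+2) : ℝ) * p^(m+2) + c * ((n.descFactorial (m+1) : ℝ) * p^(m+1)) := by
    rw [← hFM1, ← hFM2, Finset.mul_sum, ← Finset.sum_add_distrib]
    apply Finset.sum_congr rfl
    intro i _
    ring
  have hD1 := pow_sub_le_descFactorial n (m+2) (by omega) hkn
  have hD2 := pow_sub_le_descFactorial n (m+1) (by omega) (by omega)
  simp only [Nat.add_sub_cancel] at hD1 hD2
  push_cast at hD1 hD2
  have hb1 : (n:ℝ)^(m+2) - c * (n:ℝ)^(m+1) ≤ (n.descFactorial (m+2) : ℝ) := by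
    have : (n:ℝ)^(m+2) - c * (n:ℝ)^(m+1) = (n:ℝ)^(m+2) - ((m:ℝ)+2)*(((m:ℝ)+2)-1)/2 * (n:ℝ)^(m+1) := by
      rw [hcdef]; ring
    linarith [hD1]
  have hb2 : (n:ℝ)^(m+1) - c * (n:ℝ)^m ≤ (n.descFactorial (m+1) : ℝ) := by
    have hpm : (0:ℝ) ≤ (n:ℝ)^m := by positivity
    have h3 : ((m:ℝ)+1)*(((m:ℝ)+1)-1)/2 * (n:ℝ)^m ≤ c * (n:ℝ)^m := by
      rw [hcdef]; nlinarith [mul_nonneg (show (0:ℝ) ≤ (m:ℝ)+1 by positivity) hpm]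
    linarith [hD2, h3]
  have hT : ((n : ℝ) * p) ^ (m+2) * (1 - ((m+2:ℕ) : ℝ) * (((m+2:ℕ):ℝ) - 1) / 2 / n) *
        (1 + ((m+2:ℕ) : ℝ) * (((m+2:ℕ):ℝ) - 1) / 2 / ((n : ℝ) * p))
      = p^(m+2) * ((n:ℝ)^(m+2) - c * (n:ℝ)^(m+1))
        + c * (p^(m+1) * ((n:ℝ)^(m+1) - c * (n:ℝ)^m)) := by
    push_cast
    rw [hcdef]
    field_simp
    ring
  calc ((n : ℝ) * p) ^ (m+2) * (1 - ((m+2:ℕ) : ℝ) * (((m+2:ℕ):ℝ) - 1) / 2 / n) *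
        (1 + ((m+2:ℕ) : ℝ) * (((m+2:ℕ):ℝ) - 1) / 2 / ((n : ℝ) * p))
      = p^(m+2) * ((n:ℝ)^(m+2) - c * (n:ℝ)^(m+1))
        + c * (p^(m+1) * ((n:ℝ)^(m+1) - c * (n:ℝ)^m)) := hT
    _ ≤ p^(m+2) * (n.descFactorial (m+2) : ℝ) + c * (p^(m+1) * (n.descFactorial (m+1) : ℝ)) := by
        have t1 := mul_le_mul_of_nonneg_left hb1 (le_of_lt (pow_pos hp0 (m+2)))
        have t2 := mul_le_mul_of_nonneg_left hb2 (le_of_lt (pow_pos hp0 (m+1)))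
        nlinarith [mul_le_mul_of_nonneg_left t2 hc0]
    _ = (n.descFactorial (m+2) : ℝ) * p^(m+2) + c * ((n.descFactorial (m+1) : ℝ) * p^(m+1)) := by
        ring
    _ = ∑ i ∈ Finset.range (n+1),
        ((i.descFactorial (m+2) : ℝ) + c * (i.descFactorial (m+1) : ℝ)) *
          ((n.choose i : ℝ) * p^i * (1-p)^(n-i)) := hsplit.symm
    _ ≤ ∑ i ∈ Finset.range (n+1),
        (i:ℝ)^(m+2) * ((n.choose i : ℝ) * p^i * (1-p)^(n-i)) := Finset.sum_le_sum h1
end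

section
/- Let k be a positive real and μ ≥ 1 an integer. If S is a Poisson random variable with mean μ and X is a Poisson random variable with mean 1, then E[(S/μ)^k] ≥ (E[X^{k/μ}])^μ; equivalently B(k,μ)/μ^k ≥ B_{k/μ}^μ, where B(k,μ) is the Bell polynomial extended to real k via Dobiński's formula and B_x = B(x,1). -/
open Real


lemma summable_bell (c : ℝ) (hc : 0 < c) (x : ℝ) (hx : 0 ≤ x) :
    Summable (fun n : ℕ => (n : ℝ) ^ c * x ^ n / n.factorial) := by
  have hle : ∀ n : ℕ, (n : ℝ) ^ c * x ^ n / n.factorial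
      ≤ (Real.exp c * x) ^ n / n.factorial := by
    intro n
    rcases Nat.eq_zero_or_pos n with h | h
    · subst h
      simp [Real.zero_rpow hc.ne']
    · have hn : (0:ℝ) < n := by exact_mod_cast h
      have h1 : (n:ℝ)^c ≤ Real.exp c ^ n := by
        rw [Real.rpow_def_of_pos hn, ← Real.exp_nat_mul]
        apply Real.exp_le_exp.2
        have hl : Real.log n ≤ n := (Real.log_le_sub_one_of_pos hn).trans (by linarith)
        nlinarith [hc.le, Real.log_nonneg (by exact_mod_cast h : (1:ℝ) ≤ n)]
      have h2 : (n:ℝ)^c * x ^ n ≤ (Real.exp c * x) ^ n := by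
        rw [mul_pow]
        exact mul_le_mul_of_nonneg_right h1 (pow_nonneg hx n)
      exact div_le_div_of_nonneg_right h2 (by positivity)
  exact Summable.of_nonneg_of_le (fun n => by positivity) hle
    (Real.summable_pow_div_factorial _)

lemma antidiag_sum (x y : ℝ) (n : ℕ) :
    ∑ p ∈ Finset.HasAntidiagonal.antidiagonal n, x ^ p.1 * y ^ p.2 / (p.1.factorial * p.2.factorial)
      = (x + y) ^ n / n.factorial := by
  rw [Finset.Nat.sum_antidiagonal_eq_sum_range_succ_mk, add_pow, Finset.sum_div]
  refine Finset.sum_congr rfl (fun k hk => ?_)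
  have hkn : k ≤ n := Nat.lt_succ_iff.1 (Finset.mem_range.1 hk)
  rw [Nat.cast_choose ℝ hkn]
  have h1 : (Nat.factorial k : ℝ) ≠ 0 := by positivity
  have h2 : (Nat.factorial (n - k) : ℝ) ≠ 0 := by positivity
  have h3 : (Nat.factorial n : ℝ) ≠ 0 := by positivity
  field_simp

lemma amgm_step (c : ℝ) (hc : 0 < c) (M : ℝ) (hM : 1 ≤ M) (a b : ℝ) (ha : 0 ≤ a)
    (hb : 0 ≤ b) : a ^ c * (b / M) ^ (c * M) ≤ ((a + b) / (M + 1)) ^ (c * (M + 1)) := by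
  have hM0 : (0:ℝ) < M := lt_of_lt_of_le one_pos hM
  have hM1 : (0:ℝ) < M + 1 := by linarith
  have hw : 1 / (M + 1) + M / (M + 1) = 1 := by field_simp; ring
  have hgm := Real.geom_mean_le_arith_mean2_weighted
    (by positivity : (0:ℝ) ≤ 1 / (M + 1)) (by positivity : (0:ℝ) ≤ M / (M + 1))
    ha (by positivity : (0:ℝ) ≤ b / M) hw
  have harith : 1 / (M + 1) * a + M / (M + 1) * (b / M) = (a + b) / (M + 1) := by
    field_simp
  rw [harith] at hgm
  have hnn : 0 ≤ a ^ (1 / (M + 1)) * (b / M) ^ (M / (M + 1)) := by positivity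
  have := Real.rpow_le_rpow hnn hgm (by positivity : (0:ℝ) ≤ c * (M + 1))
  calc a ^ c * (b / M) ^ (c * M)
      = (a ^ (1 / (M + 1)) * (b / M) ^ (M / (M + 1))) ^ (c * (M + 1)) := by
        rw [Real.mul_rpow (by positivity) (by positivity), ← Real.rpow_mul ha,
          ← Real.rpow_mul (by positivity)]
        congr 1
        · congr 1
          field_simp
        · congr 1
          field_simp
    _ ≤ ((a + b) / (M + 1)) ^ (c * (M + 1)) := this

lemma cauchy_step (c : ℝ) (hc : 0 < c) (M : ℝ) (hM : 1 ≤ M) :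
    (∑' i : ℕ, (i:ℝ) ^ c / i.factorial)
        * (∑' n : ℕ, ((n:ℝ) / M) ^ (c * M) * M ^ n / n.factorial)
      ≤ ∑' n : ℕ, ((n:ℝ) / (M + 1)) ^ (c * (M + 1)) * (M + 1) ^ n / n.factorial := by
  have hM0 : (0:ℝ) < M := lt_of_lt_of_le one_pos hM
  set a : ℕ → ℝ := fun i => (i:ℝ) ^ c / i.factorial with ha_def
  set b : ℕ → ℝ := fun j => ((j:ℝ) / M) ^ (c * M) * M ^ j / j.factorial with hb_def
  set T : ℕ → ℝ := fun n => ((n:ℝ) / (M + 1)) ^ (c * (M + 1)) * (M + 1) ^ n / n.factorial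
    with hT_def
  have ha_nonneg : ∀ i, 0 ≤ a i := fun i => by positivity
  have hb_nonneg : ∀ j, 0 ≤ b j := fun j => by positivity
  have ha : Summable a := by
    have := summable_bell c hc 1 zero_le_one
    simpa [ha_def] using this
  have hb : Summable b := by
    have h1 := (summable_bell (c * M) (by positivity) M hM0.le).mul_left ((M ^ (c * M))⁻¹)
    refine h1.congr (fun j => ?_)
    simp only [hb_def]
    rw [Real.div_rpow (Nat.cast_nonneg j) hM0.le]
    ring
  have hT_sum : Summable T := by
    have h1 := (summable_bell (c * (M + 1)) (by positivity) (M + 1) (by positivity)).mul_left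
      (((M + 1) ^ (c * (M + 1)))⁻¹)
    refine h1.congr (fun n => ?_)
    simp only [hT_def]
    rw [Real.div_rpow (Nat.cast_nonneg n) (by positivity : (0:ℝ) ≤ M + 1)]
    ring
  have hab : Summable (fun x : ℕ × ℕ => a x.1 * b x.2) :=
    ha.mul_of_nonneg hb ha_nonneg hb_nonneg
  have hcauchy : (∑' i, a i) * (∑' j, b j)
      = ∑' n, ∑ kl ∈ Finset.HasAntidiagonal.antidiagonal n, a kl.1 * b kl.2 :=
    Summable.tsum_mul_tsum_eq_tsum_sum_antidiagonal ha hb hab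
  have hsum_c : Summable (fun n => ∑ kl ∈ Finset.HasAntidiagonal.antidiagonal n, a kl.1 * b kl.2) :=
    summable_sum_mul_antidiagonal_of_summable_mul hab
  have hterm : ∀ n, ∑ kl ∈ Finset.HasAntidiagonal.antidiagonal n, a kl.1 * b kl.2 ≤ T n := by
    intro n
    have h2 : ∀ kl ∈ Finset.HasAntidiagonal.antidiagonal n, a kl.1 * b kl.2
        ≤ ((n:ℝ) / (M + 1)) ^ (c * (M + 1))
            * ((1:ℝ) ^ kl.1 * M ^ kl.2 / (kl.1.factorial * kl.2.factorial)) := by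
      rintro ⟨i, j⟩ hkl
      have hij : i + j = n := Finset.HasAntidiagonal.mem_antidiagonal.1 hkl
      have hg := amgm_step c hc M hM (i:ℝ) (j:ℝ) (Nat.cast_nonneg i) (Nat.cast_nonneg j)
      have hcast : (i:ℝ) + (j:ℝ) = (n:ℝ) := by exact_mod_cast congrArg (Nat.cast (R := ℝ)) hij
      rw [hcast] at hg
      have heq : a i * b j = ((i:ℝ) ^ c * ((j:ℝ) / M) ^ (c * M))
          * ((1:ℝ) ^ i * M ^ j / (i.factorial * j.factorial)) := by
        simp only [ha_def, hb_def, one_pow]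
        ring
      rw [heq]
      have hnn : (0:ℝ) ≤ (1:ℝ) ^ i * M ^ j / (i.factorial * j.factorial) := by positivity
      exact mul_le_mul_of_nonneg_right hg hnn
    calc ∑ kl ∈ Finset.HasAntidiagonal.antidiagonal n, a kl.1 * b kl.2
        ≤ ∑ kl ∈ Finset.HasAntidiagonal.antidiagonal n, ((n:ℝ) / (M + 1)) ^ (c * (M + 1))
            * ((1:ℝ) ^ kl.1 * M ^ kl.2 / (kl.1.factorial * kl.2.factorial)) :=
          Finset.sum_le_sum h2
      _ = ((n:ℝ) / (M + 1)) ^ (c * (M + 1)) * ((1 + M) ^ n / n.factorial) := by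
          rw [← Finset.mul_sum, antidiag_sum]
      _ = T n := by
          simp only [hT_def]
          rw [add_comm 1 M]
          ring
  calc (∑' i, a i) * (∑' j, b j)
      = ∑' n, ∑ kl ∈ Finset.HasAntidiagonal.antidiagonal n, a kl.1 * b kl.2 := hcauchy
    _ ≤ ∑' n, T n := Summable.tsum_le_tsum hterm hsum_c hT_sum

lemma key (c : ℝ) (hc : 0 < c) : ∀ m : ℕ, 1 ≤ m →
    (∑' i : ℕ, (i:ℝ) ^ c / i.factorial) ^ m
      ≤ ∑' n : ℕ, ((n:ℝ) / (m:ℝ)) ^ (c * (m:ℝ)) * (m:ℝ) ^ n / n.factorial := by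
  intro m
  induction m with
  | zero => intro h; omega
  | succ m IH =>
    intro _
    rcases Nat.eq_zero_or_pos m with hm0 | hm1
    · subst hm0
      simp
    · have hIH := IH hm1
      have hstep := cauchy_step c hc (m:ℝ) (by exact_mod_cast hm1)
      have hA : (0:ℝ) ≤ ∑' i : ℕ, (i:ℝ) ^ c / (i.factorial : ℝ) :=
        tsum_nonneg (fun i => by positivity)
      push_cast
      calc (∑' i : ℕ, (i:ℝ) ^ c / (i.factorial : ℝ)) ^ (m + 1)
          = (∑' i : ℕ, (i:ℝ) ^ c / (i.factorial : ℝ))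
              * (∑' i : ℕ, (i:ℝ) ^ c / (i.factorial : ℝ)) ^ m := by ring
        _ ≤ (∑' i : ℕ, (i:ℝ) ^ c / (i.factorial : ℝ))
              * (∑' n : ℕ, ((n:ℝ) / (m:ℝ)) ^ (c * (m:ℝ)) * (m:ℝ) ^ n / n.factorial) :=
            mul_le_mul_of_nonneg_left hIH hA
        _ ≤ ∑' n : ℕ, ((n:ℝ) / ((m:ℝ) + 1)) ^ (c * ((m:ℝ) + 1)) * ((m:ℝ) + 1) ^ n
              / n.factorial := hstep

/-- For real `k > 0` and integer `μ ≥ 1`, with `B(x,m) = e^{-m} ∑ i^x m^i / i!` the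
Bell polynomial extended to real `x` via Dobiński's formula:
`B(k,μ)/μ^k ≥ (B_{k/μ})^μ` where `B_x = B(x,1)`. -/
theorem bell_polynomial_lower_bound (k : ℝ) (hk : 0 < k) (μ : ℕ) (hμ : 1 ≤ μ) :
    (Real.exp (-(1 : ℝ)) * ∑' i : ℕ, (i : ℝ) ^ (k / μ) / (Nat.factorial i)) ^ μ ≤
      (Real.exp (-(μ : ℝ)) * ∑' i : ℕ, (i : ℝ) ^ k * (μ : ℝ) ^ i / (Nat.factorial i)) /
        (μ : ℝ) ^ k := by
  have hμ0 : (0:ℝ) < μ := by exact_mod_cast hμ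
  have hc : 0 < k / μ := div_pos hk hμ0
  have hkey := key (k / μ) hc μ hμ
  have hexp : (k / (μ:ℝ)) * (μ:ℝ) = k := div_mul_cancel₀ k hμ0.ne'
  rw [hexp] at hkey
  have hrw : ∀ n : ℕ, ((n:ℝ) / μ) ^ k * (μ:ℝ) ^ n / n.factorial
      = ((n:ℝ) ^ k * (μ:ℝ) ^ n / n.factorial) / (μ:ℝ) ^ k := by
    intro n
    rw [Real.div_rpow (Nat.cast_nonneg n) hμ0.le]
    ring
  rw [tsum_congr hrw, tsum_div_const] at hkey
  have hL : (Real.exp (-(1:ℝ)) * ∑' i : ℕ, (i:ℝ) ^ (k/μ) / i.factorial) ^ μ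
      = Real.exp (-(μ:ℝ)) * (∑' i : ℕ, (i:ℝ) ^ (k/μ) / i.factorial) ^ μ := by
    rw [mul_pow, ← Real.exp_nat_mul, mul_neg_one]
  rw [hL, mul_div_assoc]
  exact mul_le_mul_of_nonneg_left hkey (Real.exp_nonneg _)
end
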